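/- Let P̃₁, P̃₂ be non-deterministic random probability measures on X with the same mean measure P₀, satisfying Cov(P̃₁(A), P̃₂(A)) = η · P₀(A)(1 − P₀(A)) for all measurable A and some η ∈ [−1,1], and Var(P̃ᵢ(A)) = λᵢ · P₀(A)(1 − P₀(A)) for all measurable A with λᵢ ∈ (0,1], i = 1,2. Then for every injective kernel k and every measurable set A such that P̃₁(A) and P̃₂(A) are not deterministic, Corr_k(P̃₁,P̃₂) = Corr(P̃₁(A), P̃₂(A)) = η / √(λ₁ λ₂). In particular, the kernel correlation does not depend on the choice of the injective kernel k. -/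

import Mathlib

/-!
The second-moment measure `M = E[P̃₁ ⊗ P̃₂]` on `X × X` has rectangle masses
`M(A × B) = E[P̃₁(A) P̃₂(B)]`. The covariance hypothesis fixes these on squares `A × A`, and a
swap-symmetric finite measure is determined by its squares (polarization), so
`M + swap M = 2η D + 2(1 - η) P₀ ⊗ P₀`, where `D` is `P₀` pushed to the diagonal. Since
`⟪μ_k(P), μ_k(Q)⟫ = ∫ k d(P ⊗ Q)` and `k` is symmetric, integrating `k` gives
`Cov_k(P̃₁, P̃₂) = η s` and `Var_k(P̃ᵢ) = λᵢ s` with `s = E k(Y, Y) - E k(Y, Y')` for independent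
`Y, Y' ∼ P₀`, so `s` cancels in the kernel correlation. It is positive: `2 s = E ‖φ(Y) - φ(Y')‖²`
vanishes for an injective feature map `φ` only if `P₀`, and then almost every `P̃₁`, is a point
mass. The same cancellation of `P₀(A)(1 - P₀(A))` gives the correlation on a set `A`; this factor
is nonzero because `P̃₁(A)` is not deterministic.
-/

open MeasureTheory ProbabilityTheory Filter
open scoped RealInnerProductSpace ENNReal NNReal

noncomputable section

/-- A positive-definite function `k`. -/
def IsPosDef {X : Type*} (k : X → X → ℝ) : Prop :=
  ∀ (n : ℕ) (x : Fin n → X) (c : Fin n → ℝ),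
    0 ≤ ∑ i : Fin n, ∑ j : Fin n, c i * c j * k (x i) (x j)

/-- A bounded, measurable, symmetric, positive-definite kernel. -/
structure IsKernel {X : Type*} [MeasurableSpace X] (k : X → X → ℝ) : Prop where
  measurable : Measurable (Function.uncurry k)
  bounded : ∃ C : ℝ, ∀ x y, |k x y| ≤ C
  symm : ∀ x y, k x y = k y x
  posDef : IsPosDef k

/-- A realization of the reproducing kernel Hilbert space of `k`: a Hilbert space together with
a feature map reproducing `k` whose feature vectors span a dense subspace. -/
structure FeatureMap {X : Type*} [MeasurableSpace X] (k : X → X → ℝ)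
    (H : Type*) [NormedAddCommGroup H] [InnerProductSpace ℝ H] : Type _ where
  toFun : X → H
  stronglyMeasurable : StronglyMeasurable toFun
  repro : ∀ x y, ⟪toFun x, toFun y⟫ = k x y
  dense_span : Dense (Submodule.span ℝ (Set.range toFun) : Set H)

/-- Kernel mean embedding of a measure, as a Bochner integral of the feature map. -/
def meanEmb {X : Type*} [MeasurableSpace X] {k : X → X → ℝ} {H : Type*}
    [NormedAddCommGroup H] [InnerProductSpace ℝ H] [CompleteSpace H]
    (F : FeatureMap k H) (μ : Measure X) : H :=
  ∫ x, F.toFun x ∂μ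

/-- Kernel covariance of two random probability measures,
`Cov_k(P₁,P₂) = E[⟪μ_k(P₁) - E[μ_k(P₁)], μ_k(P₂) - E[μ_k(P₂)]⟫]`. -/
def kerCov {X : Type*} [MeasurableSpace X] {k : X → X → ℝ} {H : Type*}
    [NormedAddCommGroup H] [InnerProductSpace ℝ H] [CompleteSpace H]
    {Ω : Type*} [MeasurableSpace Ω]
    (F : FeatureMap k H) (Pr : Measure Ω) (P₁ P₂ : Ω → Measure X) : ℝ :=
  ∫ ω, ⟪meanEmb F (P₁ ω) - ∫ ω', meanEmb F (P₁ ω') ∂Pr,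
        meanEmb F (P₂ ω) - ∫ ω', meanEmb F (P₂ ω') ∂Pr⟫ ∂Pr

/-- Kernel variance of a random probability measure. -/
def kerVar {X : Type*} [MeasurableSpace X] {k : X → X → ℝ} {H : Type*}
    [NormedAddCommGroup H] [InnerProductSpace ℝ H] [CompleteSpace H]
    {Ω : Type*} [MeasurableSpace Ω]
    (F : FeatureMap k H) (Pr : Measure Ω) (P : Ω → Measure X) : ℝ :=
  kerCov F Pr P P

/-- Kernel correlation of two random probability measures. -/
def kerCorr {X : Type*} [MeasurableSpace X] {k : X → X → ℝ} {H : Type*}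
    [NormedAddCommGroup H] [InnerProductSpace ℝ H] [CompleteSpace H]
    {Ω : Type*} [MeasurableSpace Ω]
    (F : FeatureMap k H) (Pr : Measure Ω) (P₁ P₂ : Ω → Measure X) : ℝ :=
  kerCov F Pr P₁ P₂ / (Real.sqrt (kerVar F Pr P₁) * Real.sqrt (kerVar F Pr P₂))

/-- Covariance of two real random variables. -/
def rCov {Ω : Type*} [MeasurableSpace Ω] (Pr : Measure Ω) (U V : Ω → ℝ) : ℝ :=
  ∫ ω, (U ω - ∫ ω', U ω' ∂Pr) * (V ω - ∫ ω', V ω' ∂Pr) ∂Pr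

/-- Variance of a real random variable. -/
def rVar {Ω : Type*} [MeasurableSpace Ω] (Pr : Measure Ω) (U : Ω → ℝ) : ℝ :=
  rCov Pr U U

/-- Pearson correlation of two real random variables. -/
def rCorr {Ω : Type*} [MeasurableSpace Ω] (Pr : Measure Ω) (U V : Ω → ℝ) : ℝ :=
  rCov Pr U V / (Real.sqrt (rVar Pr U) * Real.sqrt (rVar Pr V))

end

noncomputable section

/-- A kernel is injective if its feature map `x ↦ k(x,·)` is injective. -/
def IsInjectiveKernel {Z : Type*} (k : Z → Z → ℝ) : Prop :=
  Function.Injective fun x => (fun y => k x y)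

namespace MeasureTheory.Measure

variable {X : Type*} [MeasurableSpace X]

lemma measureReal_union_prod_union (μ : Measure (X × X)) [IsFiniteMeasure μ] {U V W Z : Set X}
    (hU : MeasurableSet U) (hV : MeasurableSet V) (hW : MeasurableSet W) (hZ : MeasurableSet Z)
    (hUV : Disjoint U V) (hWZ : Disjoint W Z) :
    μ.real ((U ∪ V) ×ˢ (W ∪ Z))
      = μ.real (U ×ˢ W) + μ.real (U ×ˢ Z) + μ.real (V ×ˢ W) + μ.real (V ×ˢ Z) := by
  rw [Set.union_prod,
    measureReal_union (Set.disjoint_prod.2 (Or.inl hUV)) (hV.prod (hW.union hZ)),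
    Set.prod_union, Set.prod_union,
    measureReal_union (Set.disjoint_prod.2 (Or.inr hWZ)) (hU.prod hZ),
    measureReal_union (Set.disjoint_prod.2 (Or.inr hWZ)) (hV.prod hZ)]
  ring

lemma measureReal_prod_comm_of_map_swap {μ : Measure (X × X)} (hμ : μ.map Prod.swap = μ)
    {A B : Set X} (hA : MeasurableSet A) (hB : MeasurableSet B) :
    μ.real (A ×ˢ B) = μ.real (B ×ˢ A) := by
  conv_lhs => rw [← hμ, measureReal_def, map_apply measurable_swap (hA.prod hB),
    Set.preimage_swap_prod, ← measureReal_def]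

theorem ext_of_map_swap_of_measureReal_prod_self {μ ν : Measure (X × X)}
    [IsFiniteMeasure μ] [IsFiniteMeasure ν] (hμ : μ.map Prod.swap = μ) (hν : ν.map Prod.swap = ν)
    (h : ∀ A, MeasurableSet A → μ.real (A ×ˢ A) = ν.real (A ×ˢ A)) : μ = ν := by
  have disjoint_rect : ∀ U V, MeasurableSet U → MeasurableSet V → Disjoint U V →
      μ.real (U ×ˢ V) = ν.real (U ×ˢ V) := by
    intro U V hU hV hUV
    have hμUV := measureReal_union_prod_union μ hU hV hU hV hUV hUV
    have hνUV := measureReal_union_prod_union ν hU hV hU hV hUV hUV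
    rw [measureReal_prod_comm_of_map_swap hμ hV hU] at hμUV
    rw [measureReal_prod_comm_of_map_swap hν hV hU] at hνUV
    linarith [h _ (hU.union hV), h U hU, h V hV]
  have rect : ∀ A B, MeasurableSet A → MeasurableSet B → μ (A ×ˢ B) = ν (A ×ˢ B) := by
    intro A B hA hB
    have hAB : A \ B ∪ A ∩ B = A := Set.sdiff_union_inter A B
    have hBA : B \ A ∪ A ∩ B = B := by rw [Set.inter_comm]; exact Set.sdiff_union_inter B A
    have d₁ : Disjoint (A \ B) (A ∩ B) := Set.disjoint_sdiff_left.mono_right Set.inter_subset_right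
    have d₂ : Disjoint (B \ A) (A ∩ B) := Set.disjoint_sdiff_left.mono_right Set.inter_subset_left
    have d₃ : Disjoint (A \ B) (B \ A) := Set.disjoint_sdiff_left.mono_right Set.sdiff_subset
    have expand := fun (ρ : Measure (X × X)) [IsFiniteMeasure ρ] =>
      measureReal_union_prod_union ρ (hA.diff hB) (hA.inter hB) (hB.diff hA) (hA.inter hB) d₁ d₂
    refine (ENNReal.toReal_eq_toReal_iff' (measure_ne_top _ _) (measure_ne_top _ _)).1 ?_
    rw [← measureReal_def, ← measureReal_def,
      show A ×ˢ B = (A \ B ∪ A ∩ B) ×ˢ (B \ A ∪ A ∩ B) by rw [hAB, hBA], expand μ, expand ν,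
      disjoint_rect _ _ (hA.diff hB) (hB.diff hA) d₃,
      disjoint_rect _ _ (hA.diff hB) (hA.inter hB) d₁,
      measureReal_prod_comm_of_map_swap hμ (hA.inter hB) (hB.diff hA),
      measureReal_prod_comm_of_map_swap hν (hA.inter hB) (hB.diff hA),
      disjoint_rect _ _ (hB.diff hA) (hA.inter hB) d₂, h _ (hA.inter hB)]
  refine ext_of_generate_finite _ generateFrom_prod.symm isPiSystem_prod ?_ ?_
  · rintro _ ⟨A, hA, B, hB, rfl⟩
    exact rect A B hA hB
  · rw [← Set.univ_prod_univ]
    exact rect _ _ MeasurableSet.univ MeasurableSet.univ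

lemma map_swap_map_diag (μ : Measure X) :
    (μ.map fun x => (x, x)).map Prod.swap = μ.map fun x => (x, x) := by
  have hdiag : Measurable fun x : X => (x, x) := measurable_diag
  rw [map_map measurable_swap hdiag]
  rfl

lemma eq_dirac_of_ae_eq {μ : Measure X} [IsProbabilityMeasure μ] {x : X}
    (h : ∀ᵐ y ∂μ, y = x) : μ = dirac x := by
  have hμ : μ.restrict {x} = μ := restrict_eq_self_of_ae_mem h
  have hx : μ {x} = 1 := by rw [← restrict_apply_univ, hμ, measure_univ]
  rw [← hμ, restrict_singleton, hx, one_smul]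

lemma exists_ae_eq_of_ae_fst_eq_snd {μ : Measure X} [IsProbabilityMeasure μ]
    (h : ∀ᵐ z ∂μ.prod μ, z.1 = z.2) : ∃ x, ∀ᵐ y ∂μ, y = x := by
  obtain ⟨x, hx⟩ := (ae_ae_of_ae_prod h).exists
  exact ⟨x, hx.mono fun _ hy => hy.symm⟩

lemma integral_bind {Ω E : Type*} [MeasurableSpace Ω] [NormedAddCommGroup E] [NormedSpace ℝ E]
    {μ : Measure Ω} [SFinite μ] {κ : Kernel Ω X} [IsSFiniteKernel κ] {f : X → E}
    (hf : Integrable f (κ ∘ₘ μ)) :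
    ∫ x, f x ∂(κ ∘ₘ μ) = ∫ ω, ∫ x, f x ∂(κ ω) ∂μ := by
  rw [← snd_compProd] at hf ⊢
  rw [Measure.snd, integral_map measurable_snd.aemeasurable hf.aestronglyMeasurable]
  exact integral_compProd
    ((integrable_map_measure hf.aestronglyMeasurable measurable_snd.aemeasurable).1 hf)

end MeasureTheory.Measure

namespace ProbabilityTheory

variable {Ω X : Type*} [MeasurableSpace Ω] [MeasurableSpace X] {Pr : Measure Ω}
  {κ₁ κ₂ : Kernel Ω X} [IsMarkovKernel κ₁] [IsMarkovKernel κ₂]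

lemma memLp_toReal_apply [IsFiniteMeasure Pr] (κ : Kernel Ω X) [IsMarkovKernel κ] {A : Set X}
    (hA : MeasurableSet A) (p : ℝ≥0∞) : MemLp (fun ω => (κ ω A).toReal) p Pr :=
  .of_bound (κ.measurable_coe hA).ennreal_toReal.aestronglyMeasurable 1 (ae_of_all _ fun ω => by
    rw [Real.norm_eq_abs, abs_of_nonneg ENNReal.toReal_nonneg]
    exact measureReal_le_one)

lemma integral_toReal_apply (κ : Kernel Ω X) [IsMarkovKernel κ] {A : Set X}
    (hA : MeasurableSet A) : ∫ ω, (κ ω A).toReal ∂Pr = ((κ ∘ₘ Pr) A).toReal := by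
  rw [integral_toReal (κ.measurable_coe hA).aemeasurable (ae_of_all _ fun ω => measure_lt_top _ _),
    Measure.bind_apply hA κ.aemeasurable]

lemma measureReal_comp_prod_prod {A B : Set X} (hA : MeasurableSet A) (hB : MeasurableSet B) :
    ((κ₁ ×ₖ κ₂) ∘ₘ Pr).real (A ×ˢ B) = ∫ ω, (κ₁ ω A).toReal * (κ₂ ω B).toReal ∂Pr := by
  simp_rw [← ENNReal.toReal_mul, ← Kernel.prod_apply_prod (κ := κ₁) (η := κ₂)]
  rw [integral_toReal ((κ₁ ×ₖ κ₂).measurable_coe (hA.prod hB)).aemeasurable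
    (ae_of_all _ fun ω => measure_lt_top _ _), measureReal_def,
    Measure.bind_apply (hA.prod hB) (Kernel.aemeasurable _)]

/-- The covariance hypothesis says `M + swap M = 2θ D + 2(1 - θ) P₀ ⊗ P₀` for the second-moment
measure `M`, with `D` the diagonal image of `P₀`; both sides are shifted by `2(1 - θ) D` so that
all coefficients are nonnegative even when `θ < 0`. -/
theorem comp_prod_add_map_swap_add_smul_diag [IsProbabilityMeasure Pr] {θ : ℝ} (hθ : θ ≤ 1)
    {P₀ : Measure X} (h₁ : κ₁ ∘ₘ Pr = P₀) (h₂ : κ₂ ∘ₘ Pr = P₀)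
    (hcov : ∀ A, MeasurableSet A →
      cov[fun ω => (κ₁ ω A).toReal, fun ω => (κ₂ ω A).toReal; Pr]
        = θ * ((P₀ A).toReal * (1 - (P₀ A).toReal))) :
    (κ₁ ×ₖ κ₂) ∘ₘ Pr + ((κ₁ ×ₖ κ₂) ∘ₘ Pr).map Prod.swap
        + (2 * (1 - θ)).toNNReal • P₀.map (fun x => (x, x))
      = (2 : ℝ≥0) • P₀.map (fun x => (x, x)) + (2 * (1 - θ)).toNNReal • P₀.prod P₀ := by
  have : IsProbabilityMeasure P₀ := h₁ ▸ inferInstance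
  have hdiag : Measurable fun x : X => (x, x) := measurable_diag
  refine Measure.ext_of_map_swap_of_measureReal_prod_self ?_ ?_ fun A hA => ?_
  · rw [Measure.map_add _ _ measurable_swap, Measure.map_add _ _ measurable_swap,
      Measure.map_smul, Measure.map_swap_map_diag,
      Measure.map_map measurable_swap measurable_swap, Prod.swap_swap_eq, Measure.map_id,
      add_comm ((κ₁ ×ₖ κ₂) ∘ₘ Pr)]
  · rw [Measure.map_add _ _ measurable_swap, Measure.map_smul, Measure.map_smul,
      Measure.map_swap_map_diag, Measure.prod_swap]
  have hsq : ((κ₁ ×ₖ κ₂) ∘ₘ Pr).real (A ×ˢ A)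
      = θ * ((P₀ A).toReal * (1 - (P₀ A).toReal)) + (P₀ A).toReal * (P₀ A).toReal := by
    rw [measureReal_comp_prod_prod hA hA, ← hcov A hA,
      covariance_eq_sub (memLp_toReal_apply κ₁ hA 2) (memLp_toReal_apply κ₂ hA 2),
      integral_toReal_apply κ₁ hA, integral_toReal_apply κ₂ hA, h₁, h₂]
    simp only [Pi.mul_apply]
    ring
  have hswap : (((κ₁ ×ₖ κ₂) ∘ₘ Pr).map Prod.swap).real (A ×ˢ A)
      = ((κ₁ ×ₖ κ₂) ∘ₘ Pr).real (A ×ˢ A) := by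
    rw [measureReal_def, Measure.map_apply measurable_swap (hA.prod hA), Set.preimage_swap_prod,
      measureReal_def]
  have hD : (P₀.map fun x => (x, x)).real (A ×ˢ A) = (P₀ A).toReal := by
    rw [measureReal_def, Measure.map_apply hdiag (hA.prod hA)]
    congr 2
    ext x
    simp
  rw [measureReal_add_apply, measureReal_add_apply, measureReal_add_apply,
    measureReal_nnreal_smul_apply, measureReal_nnreal_smul_apply, measureReal_nnreal_smul_apply,
    hswap, hsq, hD, measureReal_prod_prod, measureReal_def,
    Real.coe_toNNReal _ (by linarith : (0 : ℝ) ≤ 2 * (1 - θ))]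
  push_cast
  ring

theorem integral_comp_prod_of_symm [IsProbabilityMeasure Pr] {θ : ℝ} (hθ : θ ≤ 1)
    {P₀ : Measure X} (h₁ : κ₁ ∘ₘ Pr = P₀) (h₂ : κ₂ ∘ₘ Pr = P₀)
    (hcov : ∀ A, MeasurableSet A →
      cov[fun ω => (κ₁ ω A).toReal, fun ω => (κ₂ ω A).toReal; Pr]
        = θ * ((P₀ A).toReal * (1 - (P₀ A).toReal)))
    {g : X × X → ℝ} (hg : Measurable g) {C : ℝ} (hgC : ∀ z, |g z| ≤ C)
    (hg_symm : ∀ x y, g (x, y) = g (y, x)) :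
    ∫ z, g z ∂((κ₁ ×ₖ κ₂) ∘ₘ Pr)
      = θ * ∫ x, g (x, x) ∂P₀ + (1 - θ) * ∫ z, g z ∂(P₀.prod P₀) := by
  have : IsProbabilityMeasure P₀ := h₁ ▸ inferInstance
  have hdiag : Measurable fun x : X => (x, x) := measurable_diag
  have hint : ∀ (μ : Measure (X × X)) [IsFiniteMeasure μ], Integrable g μ := fun μ _ =>
    .of_bound hg.aestronglyMeasurable C
      (ae_of_all _ fun z => (Real.norm_eq_abs _).trans_le (hgC z))
  have hswap : ∫ z, g z ∂(((κ₁ ×ₖ κ₂) ∘ₘ Pr).map Prod.swap)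
      = ∫ z, g z ∂((κ₁ ×ₖ κ₂) ∘ₘ Pr) := by
    rw [integral_map measurable_swap.aemeasurable hg.aestronglyMeasurable]
    exact integral_congr_ae (ae_of_all _ fun z => hg_symm z.2 z.1)
  have hD : ∫ z, g z ∂(P₀.map fun x => (x, x)) = ∫ x, g (x, x) ∂P₀ :=
    integral_map hdiag.aemeasurable hg.aestronglyMeasurable
  have key := congrArg (fun μ => ∫ z, g z ∂μ)
    (comp_prod_add_map_swap_add_smul_diag hθ h₁ h₂ hcov)
  rw [integral_add_measure (hint _) (hint _), integral_add_measure (hint _) (hint _),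
    integral_add_measure (hint _) (hint _), integral_smul_nnreal_measure,
    integral_smul_nnreal_measure, integral_smul_nnreal_measure, hswap, hD, NNReal.smul_def,
    NNReal.smul_def, NNReal.smul_def, Real.coe_toNNReal _ (by linarith : (0 : ℝ) ≤ 2 * (1 - θ)),
    smul_eq_mul, smul_eq_mul, smul_eq_mul, NNReal.coe_ofNat] at key
  linarith

end ProbabilityTheory

lemma integral_inner_sub_integral {Ω H : Type*} [MeasurableSpace Ω] [NormedAddCommGroup H]
    [InnerProductSpace ℝ H] [CompleteSpace H] {μ : Measure Ω} [IsProbabilityMeasure μ]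
    {f g : Ω → H} (hf : Integrable f μ) (hg : Integrable g μ)
    (hfg : Integrable (fun ω => ⟪f ω, g ω⟫) μ) :
    ∫ ω, ⟪f ω - ∫ ω', f ω' ∂μ, g ω - ∫ ω', g ω' ∂μ⟫ ∂μ
      = ∫ ω, ⟪f ω, g ω⟫ ∂μ - ⟪∫ ω, f ω ∂μ, ∫ ω, g ω ∂μ⟫ := by
  set a := ∫ ω, f ω ∂μ
  set b := ∫ ω, g ω ∂μ
  have hfb : ∫ ω, ⟪f ω, b⟫ ∂μ = ⟪a, b⟫ := by
    simp_rw [real_inner_comm b]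
    exact integral_inner hf b
  have hag : ∫ ω, ⟪a, g ω⟫ ∂μ = ⟪a, b⟫ := integral_inner hg a
  have hfb_int : Integrable (fun ω => ⟪f ω, b⟫) μ := by
    simp_rw [real_inner_comm b]
    exact hf.const_inner b
  have h₁ : Integrable (fun ω => ⟪f ω, g ω⟫ - ⟪f ω, b⟫) μ := hfg.sub hfb_int
  have h₂ : Integrable (fun ω => ⟪a, g ω⟫ - ⟪a, b⟫) μ :=
    (hg.const_inner a).sub (integrable_const _)
  simp_rw [inner_sub_left, inner_sub_right]
  rw [integral_sub h₁ h₂, integral_sub hfg hfb_int,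
    integral_sub (hg.const_inner a) (integrable_const _), hfb, hag, integral_const,
    probReal_univ, one_smul]
  ring

def kernelSpread {X : Type*} [MeasurableSpace X] (k : X → X → ℝ) (μ : Measure X) : ℝ :=
  ∫ x, k x x ∂μ - ∫ z, k z.1 z.2 ∂(μ.prod μ)

namespace IsKernel

variable {X : Type*} [MeasurableSpace X] {k : X → X → ℝ}

lemma integrable (hk : IsKernel k) (μ : Measure (X × X)) [IsFiniteMeasure μ] :
    Integrable (fun z => k z.1 z.2) μ := by
  obtain ⟨C, hC⟩ := hk.bounded
  exact .of_bound hk.measurable.aestronglyMeasurable C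
    (ae_of_all _ fun z => (Real.norm_eq_abs _).trans_le (hC z.1 z.2))

lemma integrable_diag (hk : IsKernel k) (μ : Measure X) [IsFiniteMeasure μ] :
    Integrable (fun x => k x x) μ := by
  obtain ⟨C, hC⟩ := hk.bounded
  exact .of_bound (hk.measurable.comp measurable_diag).aestronglyMeasurable C
    (ae_of_all _ fun x => (Real.norm_eq_abs _).trans_le (hC x x))

end IsKernel

namespace FeatureMap

variable {X : Type*} [MeasurableSpace X] {k : X → X → ℝ} {H : Type*} [NormedAddCommGroup H]
  [InnerProductSpace ℝ H] (F : FeatureMap k H)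

lemma norm_sq (x : X) : ‖F.toFun x‖ ^ 2 = k x x := by
  rw [← real_inner_self_eq_norm_sq, F.repro]

lemma norm_sub_sq (x y : X) : ‖F.toFun x - F.toFun y‖ ^ 2 = k x x + k y y - 2 * k x y := by
  rw [norm_sub_sq_real, F.norm_sq, F.norm_sq, F.repro]
  ring

lemma injective (hkinj : IsInjectiveKernel k) : Function.Injective F.toFun := fun x y hxy =>
  hkinj (funext fun z => by simp only [← F.repro, hxy])

lemma norm_le_sqrt {C : ℝ} (hC : ∀ x y, |k x y| ≤ C) (x : X) : ‖F.toFun x‖ ≤ √C :=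
  Real.le_sqrt_of_sq_le ((F.norm_sq x).trans_le (abs_le.1 (hC x x)).2)

lemma integrable (hk : IsKernel k) (μ : Measure X) [IsFiniteMeasure μ] :
    Integrable F.toFun μ := by
  obtain ⟨C, hC⟩ := hk.bounded
  exact .of_bound F.stronglyMeasurable.aestronglyMeasurable _ (ae_of_all _ (F.norm_le_sqrt hC))

lemma integrable_norm_sub_sq (hk : IsKernel k) (μ : Measure X) [IsFiniteMeasure μ] :
    Integrable (fun z : X × X => ‖F.toFun z.1 - F.toFun z.2‖ ^ 2) (μ.prod μ) := by
  simp_rw [F.norm_sub_sq]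
  have hd := hk.integrable_diag μ
  exact ((hd.comp_fst μ).add (hd.comp_snd μ)).sub ((hk.integrable _).const_mul 2)

lemma two_mul_kernelSpread (hk : IsKernel k) (μ : Measure X) [IsProbabilityMeasure μ] :
    2 * kernelSpread k μ = ∫ z, ‖F.toFun z.1 - F.toFun z.2‖ ^ 2 ∂(μ.prod μ) := by
  have hd := hk.integrable_diag μ
  have hfst : Integrable (fun z : X × X => k z.1 z.1) (μ.prod μ) := hd.comp_fst μ
  have hsnd : Integrable (fun z : X × X => k z.2 z.2) (μ.prod μ) := hd.comp_snd μ
  have hdiag : Integrable (fun z : X × X => k z.1 z.1 + k z.2 z.2) (μ.prod μ) := hfst.add hsnd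
  simp_rw [F.norm_sub_sq]
  rw [integral_sub hdiag ((hk.integrable _).const_mul 2), integral_add hfst hsnd,
    integral_const_mul, integral_fun_fst (fun x => k x x), integral_fun_snd (fun x => k x x),
    probReal_univ, one_smul, kernelSpread]
  ring

variable [CompleteSpace H]

lemma norm_meanEmb_le {C : ℝ} (hC : ∀ x y, |k x y| ≤ C) (μ : Measure X)
    [IsProbabilityMeasure μ] : ‖meanEmb F μ‖ ≤ √C := by
  simpa [meanEmb] using
    norm_integral_le_of_norm_le_const (μ := μ) (ae_of_all _ (F.norm_le_sqrt hC))

lemma inner_meanEmb (hk : IsKernel k) (μ ν : Measure X) [IsFiniteMeasure μ]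
    [IsFiniteMeasure ν] : ⟪meanEmb F μ, meanEmb F ν⟫ = ∫ z, k z.1 z.2 ∂(μ.prod ν) := by
  have hx : ∀ x, ⟪F.toFun x, meanEmb F ν⟫ = ∫ y, k x y ∂ν := fun x => by
    rw [meanEmb, ← integral_inner (F.integrable hk ν)]
    simp_rw [F.repro]
  calc ⟪meanEmb F μ, meanEmb F ν⟫ = ∫ x, ⟪F.toFun x, meanEmb F ν⟫ ∂μ := by
        simp_rw [real_inner_comm (meanEmb F ν)]
        exact (integral_inner (F.integrable hk μ) _).symm
    _ = ∫ z, k z.1 z.2 ∂(μ.prod ν) := by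
        simp_rw [hx]
        exact (integral_prod _ (hk.integrable _)).symm

variable {Ω : Type*} [MeasurableSpace Ω]

lemma stronglyMeasurable_meanEmb (κ : Kernel Ω X) [IsSFiniteKernel κ] :
    StronglyMeasurable fun ω => meanEmb F (κ ω) :=
  F.stronglyMeasurable.integral_kernel

lemma integrable_meanEmb (hk : IsKernel k) (Pr : Measure Ω) [IsFiniteMeasure Pr]
    (κ : Kernel Ω X) [IsMarkovKernel κ] : Integrable (fun ω => meanEmb F (κ ω)) Pr := by
  obtain ⟨C, hC⟩ := hk.bounded
  exact .of_bound (F.stronglyMeasurable_meanEmb κ).aestronglyMeasurable _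
    (ae_of_all _ fun ω => F.norm_meanEmb_le hC (κ ω))

lemma integral_meanEmb (hk : IsKernel k) (Pr : Measure Ω) [IsFiniteMeasure Pr]
    (κ : Kernel Ω X) [IsMarkovKernel κ] : ∫ ω, meanEmb F (κ ω) ∂Pr = meanEmb F (κ ∘ₘ Pr) :=
  (Measure.integral_bind (F.integrable hk _)).symm

variable {Pr : Measure Ω} [IsProbabilityMeasure Pr] {κ₁ κ₂ : Kernel Ω X} [IsMarkovKernel κ₁]
  [IsMarkovKernel κ₂]

theorem kerCov_eq_integral_comp_prod_sub (hk : IsKernel k) :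
    kerCov F Pr κ₁ κ₂ = ∫ z, k z.1 z.2 ∂((κ₁ ×ₖ κ₂) ∘ₘ Pr)
      - ∫ z, k z.1 z.2 ∂((κ₁ ∘ₘ Pr).prod (κ₂ ∘ₘ Pr)) := by
  obtain ⟨C, hC⟩ := hk.bounded
  have hinner : Integrable (fun ω => ⟪meanEmb F (κ₁ ω), meanEmb F (κ₂ ω)⟫) Pr :=
    .of_bound ((F.stronglyMeasurable_meanEmb κ₁).inner
      (F.stronglyMeasurable_meanEmb κ₂)).aestronglyMeasurable (√C * √C)
      (ae_of_all _ fun ω => (norm_inner_le_norm _ _).trans (mul_le_mul (F.norm_meanEmb_le hC _)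
        (F.norm_meanEmb_le hC _) (norm_nonneg _) (Real.sqrt_nonneg _)))
  rw [kerCov, integral_inner_sub_integral (F.integrable_meanEmb hk Pr κ₁)
    (F.integrable_meanEmb hk Pr κ₂) hinner, F.integral_meanEmb hk, F.integral_meanEmb hk,
    F.inner_meanEmb hk, Measure.integral_bind (hk.integrable _)]
  congr 1
  refine integral_congr_ae (ae_of_all _ fun ω => ?_)
  dsimp only
  rw [F.inner_meanEmb hk, Kernel.prod_apply]

theorem kerCov_eq_mul_kernelSpread (hk : IsKernel k) {θ : ℝ} (hθ : θ ≤ 1) {P₀ : Measure X}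
    (h₁ : κ₁ ∘ₘ Pr = P₀) (h₂ : κ₂ ∘ₘ Pr = P₀)
    (hcov : ∀ A, MeasurableSet A →
      cov[fun ω => (κ₁ ω A).toReal, fun ω => (κ₂ ω A).toReal; Pr]
        = θ * ((P₀ A).toReal * (1 - (P₀ A).toReal))) :
    kerCov F Pr κ₁ κ₂ = θ * kernelSpread k P₀ := by
  obtain ⟨C, hC⟩ := hk.bounded
  rw [F.kerCov_eq_integral_comp_prod_sub hk, integral_comp_prod_of_symm hθ h₁ h₂ hcov
    (g := fun z => k z.1 z.2) hk.measurable (fun z => hC z.1 z.2) hk.symm, h₁, h₂, kernelSpread]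
  ring

end FeatureMap

theorem kernelSpread_comp_pos {X Ω H : Type*} [MeasurableSpace X] [MeasurableSpace Ω]
    [NormedAddCommGroup H] [InnerProductSpace ℝ H] {k : X → X → ℝ} (hk : IsKernel k)
    (hkinj : IsInjectiveKernel k) (F : FeatureMap k H) {Pr : Measure Ω} [IsProbabilityMeasure Pr]
    (κ : Kernel Ω X) [IsMarkovKernel κ] (hnd : ¬ ∃ Q : Measure X, ∀ᵐ ω ∂Pr, κ ω = Q) :
    0 < kernelSpread k (κ ∘ₘ Pr) := by
  have h2 := F.two_mul_kernelSpread hk (κ ∘ₘ Pr)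
  have hnonneg : 0 ≤ ∫ z, ‖F.toFun z.1 - F.toFun z.2‖ ^ 2 ∂((κ ∘ₘ Pr).prod (κ ∘ₘ Pr)) :=
    integral_nonneg fun _ => sq_nonneg _
  refine lt_of_le_of_ne (by linarith) fun h0 => hnd ?_
  have hdiag : ∀ᵐ z ∂(κ ∘ₘ Pr).prod (κ ∘ₘ Pr), z.1 = z.2 := by
    have hzero := (integral_eq_zero_iff_of_nonneg (fun _ => sq_nonneg _)
      (F.integrable_norm_sub_sq hk _)).1 (by rw [← h2, ← h0, mul_zero])
    filter_upwards [hzero] with z hz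
    exact F.injective hkinj (sub_eq_zero.1 (norm_eq_zero.1 ((pow_eq_zero_iff two_ne_zero).1 hz)))
  obtain ⟨x, hx⟩ := Measure.exists_ae_eq_of_ae_fst_eq_snd hdiag
  exact ⟨Measure.dirac x,
    (Measure.ae_ae_of_ae_comp hx).mono fun _ hω => Measure.eq_dirac_of_ae_eq hω⟩

lemma mul_div_sqrt_mul_mul_sqrt_mul {a l₁ l₂ V : ℝ} (hV : 0 < V) (hl₁ : 0 ≤ l₁) :
    a * V / (√(l₁ * V) * √(l₂ * V)) = a / √(l₁ * l₂) := by
  rw [← Real.sqrt_mul (by positivity), show l₁ * V * (l₂ * V) = l₁ * l₂ * V ^ 2 by ring,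
    Real.sqrt_mul' _ (by positivity), Real.sqrt_sq hV.le, mul_div_mul_right _ _ hV.ne']

lemma rVar_ne_zero {Ω : Type*} [MeasurableSpace Ω] {Pr : Measure Ω} [IsProbabilityMeasure Pr]
    {U : Ω → ℝ} (hU : MemLp U 2 Pr) (hnc : ¬ ∃ c : ℝ, ∀ᵐ ω ∂Pr, U ω = c) : rVar Pr U ≠ 0 :=
  fun h => hnc ⟨_, ae_eq_integral_of_variance_eq_zero hU
    (by rwa [rVar, rCov, ← covariance, covariance_self hU.aemeasurable] at h)⟩

theorem stmt_13_general
    {X : Type*} [MeasurableSpace X]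
    {Ω : Type*} [MeasurableSpace Ω] (Pr : Measure Ω) [IsProbabilityMeasure Pr]
    (P₁ P₂ : Ω → Measure X)
    (hP₁ : ∀ ω, IsProbabilityMeasure (P₁ ω)) (hP₂ : ∀ ω, IsProbabilityMeasure (P₂ ω))
    (hP₁m : Measurable P₁) (hP₂m : Measurable P₂)
    -- `P̃₁` and `P̃₂` are not deterministic
    (hnd₁ : ¬ ∃ Q : Measure X, ∀ᵐ ω ∂Pr, P₁ ω = Q)
    -- common mean measure `P₀`
    (P₀ : Measure X) (hP₀₁ : Pr.bind P₁ = P₀) (hP₀₂ : Pr.bind P₂ = P₀)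
    -- structural covariance and variance assumptions
    (η : ℝ) (hη : η ∈ Set.Icc (-1 : ℝ) 1)
    (hcov : ∀ A : Set X, MeasurableSet A →
      rCov Pr (fun ω => (P₁ ω A).toReal) (fun ω => (P₂ ω A).toReal)
        = η * ((P₀ A).toReal * (1 - (P₀ A).toReal)))
    (lam₁ lam₂ : ℝ) (hlam₁ : lam₁ ∈ Set.Ioc (0 : ℝ) 1) (hlam₂ : lam₂ ∈ Set.Ioc (0 : ℝ) 1)
    (hvar₁ : ∀ A : Set X, MeasurableSet A →
      rVar Pr (fun ω => (P₁ ω A).toReal) = lam₁ * ((P₀ A).toReal * (1 - (P₀ A).toReal)))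
    (hvar₂ : ∀ A : Set X, MeasurableSet A →
      rVar Pr (fun ω => (P₂ ω A).toReal) = lam₂ * ((P₀ A).toReal * (1 - (P₀ A).toReal)))
    -- an injective kernel with a realization of its RKHS
    {k : X → X → ℝ} (hk : IsKernel k) (hkinj : IsInjectiveKernel k)
    {H : Type*} [NormedAddCommGroup H] [InnerProductSpace ℝ H] [CompleteSpace H]
    (F : FeatureMap k H) :
    kerCorr F Pr P₁ P₂ = η / Real.sqrt (lam₁ * lam₂) ∧
    ∀ A : Set X, MeasurableSet A →
      (¬ ∃ c : ℝ, ∀ᵐ ω ∂Pr, (P₁ ω A).toReal = c) →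
      (¬ ∃ c : ℝ, ∀ᵐ ω ∂Pr, (P₂ ω A).toReal = c) →
      rCorr Pr (fun ω => (P₁ ω A).toReal) (fun ω => (P₂ ω A).toReal)
        = η / Real.sqrt (lam₁ * lam₂) := by
  let κ₁ : Kernel Ω X := ⟨P₁, hP₁m⟩
  let κ₂ : Kernel Ω X := ⟨P₂, hP₂m⟩
  have : IsMarkovKernel κ₁ := ⟨hP₁⟩
  have : IsMarkovKernel κ₂ := ⟨hP₂⟩
  have : IsProbabilityMeasure P₀ := hP₀₁ ▸ inferInstanceAs (IsProbabilityMeasure (κ₁ ∘ₘ Pr))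
  have hspread : 0 < kernelSpread k P₀ := hP₀₁ ▸ kernelSpread_comp_pos hk hkinj F κ₁ hnd₁
  have hcov_k : kerCov F Pr P₁ P₂ = η * kernelSpread k P₀ :=
    F.kerCov_eq_mul_kernelSpread (κ₁ := κ₁) (κ₂ := κ₂) hk hη.2 hP₀₁ hP₀₂ hcov
  have hvar₁_k : kerVar F Pr P₁ = lam₁ * kernelSpread k P₀ :=
    F.kerCov_eq_mul_kernelSpread (κ₁ := κ₁) (κ₂ := κ₁) hk hlam₁.2 hP₀₁ hP₀₁ hvar₁
  have hvar₂_k : kerVar F Pr P₂ = lam₂ * kernelSpread k P₀ :=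
    F.kerCov_eq_mul_kernelSpread (κ₁ := κ₂) (κ₂ := κ₂) hk hlam₂.2 hP₀₂ hP₀₂ hvar₂
  refine ⟨?_, fun A hA hA₁ _ => ?_⟩
  · rw [kerCorr, hcov_k, hvar₁_k, hvar₂_k]
    exact mul_div_sqrt_mul_mul_sqrt_mul hspread hlam₁.1.le
  · have hU : MemLp (fun ω => (P₁ ω A).toReal) 2 Pr := memLp_toReal_apply κ₁ hA 2
    have hp : 0 < (P₀ A).toReal * (1 - (P₀ A).toReal) := by
      refine lt_of_le_of_ne (mul_nonneg ENNReal.toReal_nonneg (sub_nonneg.2 measureReal_le_one))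
        fun h => rVar_ne_zero hU hA₁ ?_
      rw [hvar₁ A hA, ← h, mul_zero]
    rw [rCorr, hcov A hA, hvar₁ A hA, hvar₂ A hA]
    exact mul_div_sqrt_mul_mul_sqrt_mul hp hlam₁.1.le

theorem stmt_13
    {X : Type*} [TopologicalSpace X] [PolishSpace X] [LocallyCompactSpace X]
    [MeasurableSpace X] [BorelSpace X]
    {Ω : Type*} [MeasurableSpace Ω] (Pr : Measure Ω) [IsProbabilityMeasure Pr]
    (P₁ P₂ : Ω → Measure X)
    (hP₁ : ∀ ω, IsProbabilityMeasure (P₁ ω)) (hP₂ : ∀ ω, IsProbabilityMeasure (P₂ ω))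
    (hP₁m : Measurable P₁) (hP₂m : Measurable P₂)
    -- `P̃₁` and `P̃₂` are not deterministic
    (hnd₁ : ¬ ∃ Q : Measure X, ∀ᵐ ω ∂Pr, P₁ ω = Q)
    (hnd₂ : ¬ ∃ Q : Measure X, ∀ᵐ ω ∂Pr, P₂ ω = Q)
    -- common mean measure `P₀`
    (P₀ : Measure X) (hP₀₁ : Pr.bind P₁ = P₀) (hP₀₂ : Pr.bind P₂ = P₀)
    -- structural covariance and variance assumptions
    (η : ℝ) (hη : η ∈ Set.Icc (-1 : ℝ) 1)
    (hcov : ∀ A : Set X, MeasurableSet A →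
      rCov Pr (fun ω => (P₁ ω A).toReal) (fun ω => (P₂ ω A).toReal)
        = η * ((P₀ A).toReal * (1 - (P₀ A).toReal)))
    (lam₁ lam₂ : ℝ) (hlam₁ : lam₁ ∈ Set.Ioc (0 : ℝ) 1) (hlam₂ : lam₂ ∈ Set.Ioc (0 : ℝ) 1)
    (hvar₁ : ∀ A : Set X, MeasurableSet A →
      rVar Pr (fun ω => (P₁ ω A).toReal) = lam₁ * ((P₀ A).toReal * (1 - (P₀ A).toReal)))
    (hvar₂ : ∀ A : Set X, MeasurableSet A →
      rVar Pr (fun ω => (P₂ ω A).toReal) = lam₂ * ((P₀ A).toReal * (1 - (P₀ A).toReal)))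
    -- an injective kernel with a realization of its RKHS
    {k : X → X → ℝ} (hk : IsKernel k) (hkinj : IsInjectiveKernel k)
    {H : Type*} [NormedAddCommGroup H] [InnerProductSpace ℝ H] [CompleteSpace H]
    (F : FeatureMap k H) :
    kerCorr F Pr P₁ P₂ = η / Real.sqrt (lam₁ * lam₂) ∧
    ∀ A : Set X, MeasurableSet A →
      (¬ ∃ c : ℝ, ∀ᵐ ω ∂Pr, (P₁ ω A).toReal = c) →
      (¬ ∃ c : ℝ, ∀ᵐ ω ∂Pr, (P₂ ω A).toReal = c) →
      rCorr Pr (fun ω => (P₁ ω A).toReal) (fun ω => (P₂ ω A).toReal)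
        = η / Real.sqrt (lam₁ * lam₂) :=
  stmt_13_general Pr P₁ P₂ hP₁ hP₂ hP₁m hP₂m hnd₁ P₀ hP₀₁ hP₀₂ η hη hcov lam₁ lam₂ hlam₁ hlam₂ hvar₁
    hvar₂ hk hkinj F

end
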